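/- For every k ≥ 2, the readability of the Hadamard graph H_k satisfies r(H_k) ≥ 2^{k−2} + 1 = n/4 + 1, where n = 2^k. -/

import Mathlib

/-!
Weight each edge `(u, v)` of an overlap labeling `ℓ` of length `r` by its shortest overlap
`ov (ℓ u) (ℓ v) ∈ [1, r]`. If a vertex `s` meets `q₁ ≠ q₂` by edges of the same weight `i`, then
`ℓ q₁` and `ℓ q₂` share their prefix of length `i` (dually, suffixes on the other side), so every
vertex adjacent to `q₁` but not to `q₂` meets `q₁` with weight `> i`. Taking such a configuration
with `i` maximal over both sides, the vertices of `N(q₁) \ N(q₂)` meet `q₁` with pairwise distinct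
weights, all different from `i`, so there are fewer than `r` of them; if there is no such
configuration, any vertex of degree two does the job.

In `H_k`, for distinct `u, v` the map `p ↦ (⟨u, p⟩, ⟨v, p⟩)` is a surjective linear map onto
`𝔽₂²`, so exactly `2^(k-2)` vectors `p` have `⟨u, p⟩ = 1` and `⟨v, p⟩ = 0`. Hence `2^(k-2) < r`.
-/

namespace Readability

def OverlapsBy {α : Type*} (x y : List α) (i : ℕ) : Prop :=
  1 ≤ i ∧ i ≤ min x.length y.length ∧ x.drop (x.length - i) = y.take i

/-- `ov x y`: the minimum `i` such that `x` overlaps `y` by `i`, or `0` if none exists. -/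
noncomputable def ov {α : Type*} (x y : List α) : ℕ := sInf {i | OverlapsBy x y i}

def IsOverlapLabeling {α Vs Vp : Type*} (E : Vs → Vp → Prop) (r : ℕ)
    (ls : Vs → List α) (lp : Vp → List α) : Prop :=
  (∀ u, (ls u).length = r) ∧ (∀ v, (lp v).length = r) ∧
    ∀ u v, E u v ↔ ∃ i, OverlapsBy (ls u) (lp v) i

noncomputable def bReadability {Vs Vp : Type*} (E : Vs → Vp → Prop) : ℕ :=
  sInf {r | ∃ (ls : Vs → List ℕ) (lp : Vp → List ℕ), IsOverlapLabeling E r ls lp}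

def IsInjOverlapLabeling {V : Type*} (A : V → V → Prop) (r : ℕ) (ℓ : V → List ℕ) : Prop :=
  (∀ v, (ℓ v).length = r) ∧ Function.Injective ℓ ∧
    ∀ u v, A u v ↔ 0 < ov (ℓ u) (ℓ v) ∧ ov (ℓ u) (ℓ v) < r

noncomputable def dReadability {V : Type*} (A : V → V → Prop) : ℕ :=
  sInf {r | ∃ ℓ : V → List ℕ, IsInjOverlapLabeling A r ℓ}

def IsDecomposition {Vs Vp : Type*} (E : Vs → Vp → Prop) (k : ℕ) (w : Vs → Vp → ℕ) : Prop :=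
  ∀ u v, E u v → 1 ≤ w u v ∧ w u v ≤ k

def InducedP4 {Vs Vp : Type*} (E : Vs → Vp → Prop) (s1 s2 : Vs) (p1 p2 : Vp) : Prop :=
  s1 ≠ s2 ∧ p1 ≠ p2 ∧ E s1 p1 ∧ E s2 p1 ∧ E s2 p2 ∧ ¬ E s1 p2

def SatisfiesP4Rule {Vs Vp : Type*} (E : Vs → Vp → Prop) (w : Vs → Vp → ℕ) : Prop :=
  ∀ s1 s2 p1 p2, InducedP4 E s1 s2 p1 p2 →
    w s2 p1 = max (w s1 p1) (max (w s2 p1) (w s2 p2)) →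
    w s1 p1 + w s2 p2 ≤ w s2 p1

def SatisfiesStrictP4Rule {Vs Vp : Type*} (E : Vs → Vp → Prop) (w : Vs → Vp → ℕ) : Prop :=
  ∀ s1 s2 p1 p2, InducedP4 E s1 s2 p1 p2 →
    w s2 p1 = max (w s1 p1) (max (w s2 p1) (w s2 p2)) →
    w s1 p1 + w s2 p2 < w s2 p1

def C4Free {Vs Vp : Type*} (E : Vs → Vp → Prop) : Prop :=
  ∀ (s1 s2 : Vs) (p1 p2 : Vp), s1 ≠ s2 → p1 ≠ p2 →
    ¬ (E s1 p1 ∧ E s1 p2 ∧ E s2 p1 ∧ E s2 p2)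

def SubAt {Vs Vp : Type*} (E : Vs → Vp → Prop) (w : Vs → Vp → ℕ) (i : ℕ) :
    Vs → Vp → Prop :=
  fun u v => E u v ∧ w u v = i

/-- A bipartite edge relation is a disjoint union of bicliques iff it has no induced `P₄`,
i.e. whenever `(s1,p1), (s2,p1), (s2,p2)` are edges, so is `(s1,p2)`. -/
def BicliqueUnion {Vs Vp : Type*} (H : Vs → Vp → Prop) : Prop :=
  ∀ s1 s2 p1 p2, H s1 p1 → H s2 p1 → H s2 p2 → H s1 p2

def SatisfiesHUBRule {Vs Vp : Type*} (E : Vs → Vp → Prop) (w : Vs → Vp → ℕ) : Prop :=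
  (∀ i, 1 ≤ i → BicliqueUnion (SubAt E w i)) ∧
  (∀ i, 2 ≤ i → ∀ u v : Vs, u ≠ v → (∃ p, SubAt E w i u p) →
      (∀ p, SubAt E w i u p ↔ SubAt E w i v p) →
      ∀ j, 1 ≤ j → j ≤ i - 1 → ∀ p, SubAt E w j u p ↔ SubAt E w j v p) ∧
  (∀ i, 2 ≤ i → ∀ u v : Vp, u ≠ v → (∃ s, SubAt E w i s u) →
      (∀ s, SubAt E w i s u ↔ SubAt E w i s v) →
      ∀ j, 1 ≤ j → j ≤ i - 1 → ∀ s, SubAt E w j s u ↔ SubAt E w j s v)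

noncomputable def hubNumber {Vs Vp : Type*} (E : Vs → Vp → Prop) : ℕ :=
  sInf {k | ∃ w, IsDecomposition E k w ∧ SatisfiesHUBRule E w}

def underlyingGraph {Vs Vp : Type*} (E : Vs → Vp → Prop) : SimpleGraph (Vs ⊕ Vp) where
  Adj x y := (∃ u v, x = Sum.inl u ∧ y = Sum.inr v ∧ E u v) ∨
    (∃ u v, x = Sum.inr v ∧ y = Sum.inl u ∧ E u v)
  symm := by
    constructor
    rintro x y (⟨u, v, rfl, rfl, h⟩ | ⟨u, v, rfl, rfl, h⟩)
    · exact Or.inr ⟨u, v, rfl, rfl, h⟩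
    · exact Or.inl ⟨u, v, rfl, rfl, h⟩
  loopless := by
    constructor
    rintro x (⟨u, v, h1, h2, -⟩ | ⟨u, v, h1, h2, -⟩) <;> subst h1 <;> simp_all

/-- The radius of a graph: the least `r` such that some vertex has eccentricity at most `r`
(for a finite connected graph this is `min_u max_v dist(u,v)`). -/
noncomputable def graphRadius {V : Type*} (G : SimpleGraph V) : ℕ :=
  sInf {r | ∃ u, ∀ v, G.dist u v ≤ r}

noncomputable def DTpair {Vs Vp : Type*} (E : Vs → Vp → Prop) (u v : Vs) : ℕ :=
  max {p : Vp | E u p ∧ ¬ E v p}.ncard {p : Vp | E v p ∧ ¬ E u p}.ncard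

noncomputable def distinctness {Vs Vp : Type*} (E : Vs → Vp → Prop) : ℕ :=
  sInf ({d | ∃ u v : Vs, u ≠ v ∧ d = DTpair E u v} ∪
        {d | ∃ u v : Vp, u ≠ v ∧ d = DTpair (fun p s => E s p) u v})

def NotMatching {Vs Vp : Type*} (E : Vs → Vp → Prop) : Prop :=
  (∃ u : Vs, ∃ p1 p2 : Vp, p1 ≠ p2 ∧ E u p1 ∧ E u p2) ∨
  (∃ p : Vp, ∃ u1 u2 : Vs, u1 ≠ u2 ∧ E u1 p ∧ E u2 p)

open Finset Matrix

section Overlap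

variable {α : Type*} {x y : List α} {i : ℕ}

theorem overlapsBy_iff :
    OverlapsBy x y i ↔ 1 ≤ i ∧ ∃ z : List α, z.length = i ∧ z <:+ x ∧ z <+: y := by
  constructor
  · rintro ⟨hi, hle, heq⟩
    exact ⟨hi, y.take i, List.length_take_of_le (by omega), heq ▸ List.drop_suffix _ _,
      List.take_prefix _ _⟩
  · rintro ⟨hi, z, rfl, hx, hy⟩
    exact ⟨hi, le_min hx.length_le hy.length_le,
      (List.suffix_iff_eq_drop.1 hx).symm.trans (List.prefix_iff_eq_take.1 hy)⟩

theorem overlapsBy_reverse : OverlapsBy y.reverse x.reverse i ↔ OverlapsBy x y i := by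
  simp only [overlapsBy_iff]
  constructor <;> rintro ⟨hi, z, rfl, hy, hx⟩
  · exact ⟨hi, z.reverse, List.length_reverse, List.reverse_prefix.1 (by simpa using hx),
      List.reverse_suffix.1 (by simpa using hy)⟩
  · exact ⟨hi, z.reverse, List.length_reverse, List.reverse_suffix.2 hx, List.reverse_prefix.2 hy⟩

theorem ov_reverse (x y : List α) : ov y.reverse x.reverse = ov x y := by
  simp only [ov, overlapsBy_reverse]

theorem overlapsBy_ov (h : ∃ i, OverlapsBy x y i) : OverlapsBy x y (ov x y) :=
  Nat.sInf_mem h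

theorem OverlapsBy.of_common_overlap {s y' : List α} {j : ℕ} (hy : OverlapsBy s y i)
    (hy' : OverlapsBy s y' i) (hx : OverlapsBy x y j) (hj : j ≤ i) : OverlapsBy x y' j := by
  obtain ⟨-, z, rfl, hsz, hyz⟩ := overlapsBy_iff.1 hy
  obtain ⟨-, z', hz', hsz', hyz'⟩ := overlapsBy_iff.1 hy'
  obtain ⟨hj₁, t, rfl, hxt, hyt⟩ := overlapsBy_iff.1 hx
  obtain rfl : z = z' := (List.suffix_of_suffix_length_le hsz hsz' hz'.ge).eq_of_length hz'.symm
  exact overlapsBy_iff.2 ⟨hj₁, t, rfl, hxt, (List.prefix_of_prefix_length_le hyt hyz hj).trans hyz'⟩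

variable {P X Y S : List α}

theorem overlapsBy_append_iff (hX : i ≤ X.length) (hY : i ≤ Y.length) :
    OverlapsBy (P ++ X) (Y ++ S) i ↔ OverlapsBy X Y i := by
  simp only [overlapsBy_iff]
  refine and_congr_right fun _ => exists_congr fun z => and_congr_right fun hz =>
    and_congr ⟨fun h => List.suffix_of_suffix_length_le h (List.suffix_append P X) (by omega),
      fun h => h.trans (List.suffix_append P X)⟩
    ⟨fun h => List.prefix_of_prefix_length_le h (List.prefix_append Y S) (by omega),
      fun h => h.trans (List.prefix_append Y S)⟩

theorem OverlapsBy.exists_mem_right_of_length_lt (h : OverlapsBy (P ++ X) (Y ++ S) i)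
    (hY : Y.length < i) (hPY : P.length ≤ Y.length) : ∃ e ∈ S, e ∈ X := by
  obtain ⟨-, z, rfl, hzPX, hzYS⟩ := overlapsBy_iff.1 h
  obtain ⟨w, rfl⟩ := List.prefix_of_prefix_length_le (List.prefix_append Y S) hzYS hY.le
  have hlen := hzPX.length_le
  simp only [List.length_append] at hY hlen
  have hwX : w <:+ X := List.suffix_of_suffix_length_le ((List.suffix_append Y w).trans hzPX)
    (List.suffix_append P X) (by omega)
  obtain ⟨e, he⟩ := List.exists_mem_of_ne_nil w (by rintro rfl; simp at hY)
  exact ⟨e, (List.prefix_append_right_inj Y |>.1 hzYS).subset he, hwX.subset he⟩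

theorem OverlapsBy.exists_mem_left_of_length_lt (h : OverlapsBy (P ++ X) (Y ++ S) i)
    (hX : X.length < i) (hSX : S.length ≤ X.length) : ∃ e ∈ P, e ∈ Y := by
  have h' := overlapsBy_reverse.2 h
  rw [List.reverse_append, List.reverse_append] at h'
  obtain ⟨e, hP, hY⟩ := h'.exists_mem_right_of_length_lt (by simpa) (by simpa)
  exact ⟨e, List.mem_reverse.1 hP, List.mem_reverse.1 hY⟩

end Overlap

section Decomposition

variable {Vs Vp : Type*} {E : Vs → Vp → Prop} {w : Vs → Vp → ℕ} {r : ℕ}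

-- For `w = ov` this holds because `q₁` and `q₂` then share their prefix of length `w s q₁`.
def CherryClosed (E : Vs → Vp → Prop) (w : Vs → Vp → ℕ) : Prop :=
  ∀ ⦃s q₁ q₂ x⦄, E s q₁ → E s q₂ → w s q₁ = w s q₂ → E x q₁ → w x q₁ ≤ w s q₁ → E x q₂

def IsCherryLevel (E : Vs → Vp → Prop) (w : Vs → Vp → ℕ) (i : ℕ) : Prop :=
  ∃ s q₁ q₂, q₁ ≠ q₂ ∧ E s q₁ ∧ E s q₂ ∧ w s q₁ = i ∧ w s q₂ = i

theorem ncard_sdiff_lt_of_injOn (hw : IsDecomposition E r w) {s : Vs} {q₁ q₂ : Vp}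
    (h₁ : E s q₁) (h₂ : E s q₂)
    (hinj : Set.InjOn (fun x => w x q₁) (insert s {x | E x q₁ ∧ ¬ E x q₂})) :
    {x | E x q₁ ∧ ¬ E x q₂}.ncard < r := by
  have hmaps : Set.MapsTo (fun x => w x q₁) (insert s {x | E x q₁ ∧ ¬ E x q₂}) (Set.Icc 1 r) := by
    rintro x (rfl | hx)
    exacts [hw _ _ h₁, hw _ _ hx.1]
  have hfin := Set.Finite.of_finite_image ((Set.finite_Icc 1 r).subset hmaps.image_subset) hinj
  calc {x | E x q₁ ∧ ¬ E x q₂}.ncard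
      < (insert s {x | E x q₁ ∧ ¬ E x q₂}).ncard := by
        rw [Set.ncard_insert_of_notMem (fun hs => hs.2 h₂) (hfin.subset (Set.subset_insert _ _))]
        omega
    _ ≤ (Set.Icc 1 r).ncard := Set.ncard_le_ncard_of_injOn _ hmaps hinj (Set.finite_Icc 1 r)
    _ = r := by simp

theorem ncard_sdiff_lt_of_isCherryLevel_le (hw : IsDecomposition E r w) (hc : CherryClosed E w)
    {s : Vs} {q₁ q₂ : Vp} (h₁ : E s q₁) (h₂ : E s q₂) (heq : w s q₁ = w s q₂)
    (hmax : ∀ j, IsCherryLevel (fun q x => E x q) (fun q x => w x q) j → j ≤ w s q₁) :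
    {x | E x q₁ ∧ ¬ E x q₂}.ncard < r := by
  have hgt {x} (hx : E x q₁) (hx₂ : ¬ E x q₂) : w s q₁ < w x q₁ :=
    lt_of_not_ge fun hle => hx₂ (hc h₁ h₂ heq hx hle)
  refine ncard_sdiff_lt_of_injOn hw h₁ h₂ ?_
  rintro x (rfl | ⟨hx, hx₂⟩) y (rfl | ⟨hy, hy₂⟩) hxy
  · rfl
  · exact absurd hxy (hgt hy hy₂).ne
  · exact absurd hxy (hgt hx hx₂).ne'
  · by_contra hne
    exact (hgt hx hx₂).not_ge (hmax _ ⟨q₁, x, y, hne, hx, hy, rfl, hxy.symm⟩)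

theorem ncard_sdiff_lt_of_forall_not_isCherryLevel (hw : IsDecomposition E r w)
    (hnone : ∀ j, ¬ IsCherryLevel (fun q x => E x q) (fun q x => w x q) j)
    {s : Vs} {q₁ q₂ : Vp} (h₁ : E s q₁) (h₂ : E s q₂) :
    {x | E x q₁ ∧ ¬ E x q₂}.ncard < r := by
  have hE {x} (hx : x ∈ insert s {x | E x q₁ ∧ ¬ E x q₂}) : E x q₁ := hx.elim (· ▸ h₁) And.left
  exact ncard_sdiff_lt_of_injOn hw h₁ h₂ fun x hx y hy hxy =>
    by_contra fun hne => hnone _ ⟨q₁, x, y, hne, hE hx, hE hy, rfl, hxy.symm⟩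

theorem exists_ncard_sdiff_lt (hw : IsDecomposition E r w) (hc : CherryClosed E w)
    (hcT : CherryClosed (fun q x => E x q) (fun q x => w x q))
    (hE : NotMatching E) :
    (∃ s₁ s₂, s₁ ≠ s₂ ∧ {q | E s₁ q ∧ ¬ E s₂ q}.ncard < r) ∨
      ∃ q₁ q₂, q₁ ≠ q₂ ∧ {x | E x q₁ ∧ ¬ E x q₂}.ncard < r := by
  classical
  let P j := IsCherryLevel E w j ∨ IsCherryLevel (fun q x => E x q) (fun q x => w x q) j
  by_cases hP : ∃ j, P j
  · have hPr : ∀ j, P j → j ≤ r := by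
      rintro j (⟨s, q, -, -, h, -, rfl, -⟩ | ⟨q, s, -, -, h, -, rfl, -⟩) <;> exact (hw _ _ h).2
    obtain ⟨j, hj⟩ := hP
    have hmax (j) (hj : P j) : j ≤ Nat.findGreatest P r := Nat.le_findGreatest (hPr j hj) hj
    rcases Nat.findGreatest_spec (hPr j hj) hj with
      ⟨s, q₁, q₂, hne, h₁, h₂, hw₁, hw₂⟩ | ⟨q, s₁, s₂, hne, h₁, h₂, hw₁, hw₂⟩
    · exact .inr ⟨q₁, q₂, hne, ncard_sdiff_lt_of_isCherryLevel_le hw hc h₁ h₂ (hw₁.trans hw₂.symm)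
        fun j hj => (hmax j (.inr hj)).trans_eq hw₁.symm⟩
    · exact .inl ⟨s₁, s₂, hne, ncard_sdiff_lt_of_isCherryLevel_le (fun q x h => hw x q h) hcT
        h₁ h₂ (hw₁.trans hw₂.symm) fun j hj => (hmax j (.inl hj)).trans_eq hw₁.symm⟩
  · simp only [not_exists] at hP
    rcases hE with ⟨s, q₁, q₂, hne, h₁, h₂⟩ | ⟨q, s₁, s₂, hne, h₁, h₂⟩
    · exact .inr ⟨q₁, q₂, hne,
        ncard_sdiff_lt_of_forall_not_isCherryLevel hw (fun j hj => hP j (.inr hj)) h₁ h₂⟩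
    · exact .inl ⟨s₁, s₂, hne, ncard_sdiff_lt_of_forall_not_isCherryLevel (fun q x h => hw x q h)
        (fun j hj => hP j (.inl hj)) h₁ h₂⟩

end Decomposition

namespace IsOverlapLabeling

variable {α Vs Vp : Type*} {E : Vs → Vp → Prop} {r : ℕ} {ls : Vs → List α} {lp : Vp → List α}

theorem isDecomposition (h : IsOverlapLabeling E r ls lp) :
    IsDecomposition E r fun u v => ov (ls u) (lp v) := by
  intro u v huv
  obtain ⟨h₁, h₂, -⟩ := overlapsBy_ov ((h.2.2 u v).1 huv)
  rw [h.1, h.2.1, min_self] at h₂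
  exact ⟨h₁, h₂⟩

theorem reverse (h : IsOverlapLabeling E r ls lp) :
    IsOverlapLabeling (fun v u => E u v) r (fun v => (lp v).reverse) (fun u => (ls u).reverse) :=
  ⟨by simp [h.2.1], by simp [h.1], fun v u => by simpa only [overlapsBy_reverse] using h.2.2 u v⟩

theorem cherryClosed (h : IsOverlapLabeling E r ls lp) :
    CherryClosed E fun u v => ov (ls u) (lp v) := by
  intro s q₁ q₂ x h₁ h₂ heq hx hle
  dsimp only at heq hle
  have hs₂ := overlapsBy_ov ((h.2.2 s q₂).1 h₂)
  rw [← heq] at hs₂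
  exact (h.2.2 x q₂).2 ⟨_, (overlapsBy_ov ((h.2.2 s q₁).1 h₁)).of_common_overlap hs₂
    (overlapsBy_ov ((h.2.2 x q₁).1 hx)) hle⟩

theorem cherryClosed_transpose (h : IsOverlapLabeling E r ls lp) :
    CherryClosed (fun v u => E u v) fun v u => ov (ls u) (lp v) := by
  simpa only [ov_reverse] using h.reverse.cherryClosed

theorem exists_ncard_sdiff_lt (h : IsOverlapLabeling E r ls lp)
    (hE : NotMatching E) :
    (∃ s₁ s₂, s₁ ≠ s₂ ∧ {q | E s₁ q ∧ ¬ E s₂ q}.ncard < r) ∨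
      ∃ q₁ q₂, q₁ ≠ q₂ ∧ {x | E x q₁ ∧ ¬ E x q₂}.ncard < r :=
  Readability.exists_ncard_sdiff_lt h.isDecomposition h.cherryClosed h.cherryClosed_transpose hE

theorem insert [DecidableEq Vs] [DecidableEq Vp] (h : IsOverlapLabeling E r ls lp) (hr : 0 < r)
    {c : α} (hcs : ∀ u, c ∉ ls u) (hcp : ∀ v, c ∉ lp v) (a : Vs) (b : Vp) :
    IsOverlapLabeling (fun u v => E u v ∨ u = a ∧ v = b) (r + r)
      (fun u => (if u = a then lp b else List.replicate r c) ++ ls u)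
      (fun v => lp v ++ if v = b then ls a else List.replicate r c) := by
  obtain ⟨hls, hlp, hE⟩ := h
  have hP (u : Vs) : (if u = a then lp b else List.replicate r c).length = r := by
    split_ifs <;> simp [hlp]
  have hS (v : Vp) : (if v = b then ls a else List.replicate r c).length = r := by
    split_ifs <;> simp [hls]
  refine ⟨fun u => by simp [hP, hls], fun v => by simp [hS, hlp], fun u v => ⟨?_, ?_⟩⟩
  · rintro (huv | ⟨rfl, rfl⟩)
    · obtain ⟨i, hi⟩ := (hE u v).1 huv
      have hir := hi.2.1
      rw [hls, hlp, min_self] at hir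
      exact ⟨i, (overlapsBy_append_iff (by rwa [hls]) (by rwa [hlp])).2 hi⟩
    · refine ⟨r + r, overlapsBy_iff.2 ⟨by omega, lp v ++ ls u, by simp [hls, hlp], ?_, ?_⟩⟩ <;>
        simp
  · rintro ⟨i, hi⟩
    -- An overlap longer than `r` would bring the fresh symbol `c` into `ls u` or `lp v`.
    rcases le_or_gt i r with hir | hir
    · exact .inl ((hE u v).2 ⟨i, (overlapsBy_append_iff (by rwa [hls]) (by rwa [hlp])).1 hi⟩)
    · refine .inr ⟨by_contra fun hu => ?_, by_contra fun hv => ?_⟩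
      · obtain ⟨e, he, hev⟩ := hi.exists_mem_left_of_length_lt (by rwa [hls]) (by rw [hS, hls])
        rw [if_neg hu, List.eq_of_mem_replicate he] at *
        exact hcp v hev
      · obtain ⟨e, he, heu⟩ := hi.exists_mem_right_of_length_lt (by rwa [hlp]) (by rw [hP, hlp])
        rw [if_neg hv, List.eq_of_mem_replicate he] at *
        exact hcs u heu

end IsOverlapLabeling

theorem exists_isOverlapLabeling {α Vs Vp : Type*} [Finite Vs] [Finite Vp] [Infinite α]
    (E : Vs → Vp → Prop) : ∃ r, ∃ (ls : Vs → List α) (lp : Vp → List α),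
      IsOverlapLabeling E r ls lp := by
  classical
  suffices ∀ F : Set (Vs × Vp), F.Finite → ∃ r, ∃ (ls : Vs → List α) (lp : Vp → List α),
      0 < r ∧ IsOverlapLabeling (fun u v => (u, v) ∈ F) r ls lp by
    obtain ⟨r, ls, lp, -, h⟩ := this {e | E e.1 e.2} (Set.toFinite _)
    exact ⟨r, ls, lp, h⟩
  intro F hF
  induction F, hF using Set.Finite.induction_on with
  | empty =>
    obtain ⟨c, d, hcd⟩ := exists_pair_ne α
    refine ⟨1, fun _ => [c], fun _ => [d], one_pos, fun _ => rfl, fun _ => rfl, fun u v => ?_⟩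
    simp only [Set.mem_empty_iff_false, false_iff]
    rintro ⟨i, hi, hi₁, heq⟩
    obtain rfl : i = 1 := by simp at hi₁; omega
    simp [hcd] at heq
  | @insert e F _ _ ih =>
    obtain ⟨r, ls, lp, hr, h⟩ := ih
    obtain ⟨c, hc⟩ := ((Set.finite_iUnion fun u => (ls u).finite_toSet).union
      (Set.finite_iUnion fun v => (lp v).finite_toSet)).exists_notMem
    simp only [Set.mem_union, Set.mem_iUnion, not_or, not_exists] at hc
    have hF : (fun u v => (u, v) ∈ insert e F) = fun u v => (u, v) ∈ F ∨ u = e.1 ∧ v = e.2 := by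
      ext u v
      simp [Prod.ext_iff, or_comm]
    exact hF ▸ ⟨r + r, _, _, by omega, h.insert hr hc.1 hc.2 e.1 e.2⟩

theorem exists_isOverlapLabeling_bReadability {Vs Vp : Type*} [Finite Vs] [Finite Vp]
    (E : Vs → Vp → Prop) :
    ∃ (ls : Vs → List ℕ) (lp : Vp → List ℕ), IsOverlapLabeling E (bReadability E) ls lp :=
  Nat.sInf_mem (exists_isOverlapLabeling E)

theorem _root_.Matrix.card_mulVec_fiber_mul_pow {K m n : Type*} [Field K] [Fintype K]
    [DecidableEq K] [Fintype m] [DecidableEq m] [Fintype n] [DecidableEq n] {A : Matrix m n K}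
    (hA : LinearIndependent K A.row) (b : m → K) :
    #{p | A *ᵥ p = b} * Fintype.card K ^ Fintype.card m = Fintype.card K ^ Fintype.card n := by
  have hsurj : Function.Surjective A.mulVecLin := by
    rw [← LinearMap.range_eq_top]
    apply Submodule.eq_top_of_finrank_eq
    rw [← Matrix.rank, hA.rank_matrix, Module.finrank_fintype_fun_eq_card]
  have hfib (b' : m → K) : #{p | A *ᵥ p = b'} = #{p | A *ᵥ p = b} :=
    AddMonoidHom.card_fiber_eq_of_mem_range A.mulVecLin.toAddMonoidHom (hsurj b') (hsurj b)
  calc #{p | A *ᵥ p = b} * Fintype.card K ^ Fintype.card m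
      = ∑ b' : m → K, #{p | A *ᵥ p = b'} := by simp [hfib, mul_comm]
    _ = Fintype.card K ^ Fintype.card n := by
      rw [← Finset.card_eq_sum_card_fiberwise (fun p _ => Finset.mem_univ (A *ᵥ p))]
      simp

theorem linearIndependent_pair_of_ne {M : Type*} [AddCommGroup M] [Module (ZMod 2) M]
    {u v : M} (hu : u ≠ 0) (hv : v ≠ 0) (huv : u ≠ v) : LinearIndependent (ZMod 2) ![u, v] := by
  rw [LinearIndependent.pair_iff]
  intro s t hst
  have h2 : ∀ x : ZMod 2, x = 0 ∨ x = 1 := by decide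
  rcases h2 s with rfl | rfl <;> rcases h2 t with rfl | rfl <;>
    simp_all [add_eq_zero_iff_eq_neg, ZModModule.neg_eq_self]

theorem card_dotProduct_fiber {k : ℕ} (hk : 2 ≤ k) {u v : Fin k → ZMod 2} (hu : u ≠ 0)
    (hv : v ≠ 0) (huv : u ≠ v) (a b : ZMod 2) :
    #{p | u ⬝ᵥ p = a ∧ v ⬝ᵥ p = b} = 2 ^ (k - 2) := by
  have h := Matrix.card_mulVec_fiber_mul_pow (A := Matrix.of ![u, v])
    (linearIndependent_pair_of_ne hu hv huv) ![a, b]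
  have hk' : 2 ^ k = 2 ^ (k - 2) * 2 ^ 2 := by rw [← pow_add, Nat.sub_add_cancel hk]
  simp only [ZMod.card, Fintype.card_fin, hk'] at h
  rw [← Nat.eq_of_mul_eq_mul_right (by positivity) h]
  congr 1
  ext p
  simp [funext_iff, Fin.forall_fin_two]

def hadamard (k : ℕ) (u v : {x : Fin k → ZMod 2 // x ≠ 0}) : Prop := u.1 ⬝ᵥ v.1 = 1

theorem hadamard_comm {k : ℕ} (u v : {x : Fin k → ZMod 2 // x ≠ 0}) :
    hadamard k u v ↔ hadamard k v u := by
  rw [hadamard, hadamard, dotProduct_comm]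

theorem hadamard_ncard_sdiff {k : ℕ} (hk : 2 ≤ k) {u v : {x : Fin k → ZMod 2 // x ≠ 0}}
    (huv : u ≠ v) : {p | hadamard k u p ∧ ¬ hadamard k v p}.ncard = 2 ^ (k - 2) := by
  have hset : {p | hadamard k u p ∧ ¬ hadamard k v p} =
      Subtype.val ⁻¹' ↑({p | u.1 ⬝ᵥ p = 1 ∧ v.1 ⬝ᵥ p = 0} : Finset (Fin k → ZMod 2)) := by
    ext p
    have h2 : ∀ x : ZMod 2, ¬ x = 1 ↔ x = 0 := by decide
    simp [hadamard, h2]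
  rw [hset, Set.ncard_preimage_of_injective_subset_range Subtype.val_injective, Set.ncard_coe_finset,
    card_dotProduct_fiber hk u.2 v.2 (Subtype.val_injective.ne huv)]
  rintro p hp
  simp only [ne_eq, coe_filter, mem_univ, true_and, Set.mem_ofPred_eq] at hp
  exact ⟨⟨p, by rintro rfl; simp at hp⟩, rfl⟩

theorem hadamard_notMatching {k : ℕ} (hk : 2 ≤ k) : NotMatching (hadamard k) := by
  let e (i : Fin k) : {x : Fin k → ZMod 2 // x ≠ 0} := ⟨Pi.single i 1, by simp⟩
  have hne : e ⟨0, by omega⟩ ≠ e ⟨1, by omega⟩ := fun h => by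
    simpa [e, Pi.single_apply, Fin.ext_iff] using congrFun (congrArg Subtype.val h) ⟨0, by omega⟩
  obtain ⟨p, hp⟩ : ({p | (e ⟨0, by omega⟩).1 ⬝ᵥ p = 1 ∧ (e ⟨1, by omega⟩).1 ⬝ᵥ p = 1} :
      Finset (Fin k → ZMod 2)).Nonempty := by
    rw [← Finset.card_pos, card_dotProduct_fiber hk (e _).2 (e _).2
      (Subtype.val_injective.ne hne)]
    positivity
  simp only [ne_eq, mem_filter, mem_univ, true_and] at hp
  exact .inl ⟨⟨p, by rintro rfl; simp at hp⟩, _, _, hne, (hadamard_comm _ _).1 hp.1,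
    (hadamard_comm _ _).1 hp.2⟩

/-- For `k ≥ 2`, the readability of the Hadamard graph `H_k` (parts: nonzero
vectors of `(ZMod 2)^k`, edges: odd inner product) is at least `2^{k−2} + 1 = n/4 + 1`. -/
theorem statement17 (k : ℕ) (hk : 2 ≤ k) :
    2 ^ (k - 2) + 1 ≤
      bReadability (fun (u v : {x : Fin k → ZMod 2 // x ≠ 0}) =>
        (∑ i, u.1 i * v.1 i) = 1) := by
  change 2 ^ (k - 2) < bReadability (hadamard k)
  obtain ⟨ls, lp, h⟩ := exists_isOverlapLabeling_bReadability (hadamard k)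
  rcases h.exists_ncard_sdiff_lt (hadamard_notMatching hk) with
    ⟨u, v, huv, hlt⟩ | ⟨u, v, huv, hlt⟩
  · rwa [hadamard_ncard_sdiff hk huv] at hlt
  · simp only [hadamard_comm _ u, hadamard_comm _ v] at hlt
    rwa [hadamard_ncard_sdiff hk huv] at hlt

end Readability
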